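/- In the Hochschild lattice of size n ≥ 1, there are exactly 2n − 1 meet-irreducible elements; they are precisely the triwords matching the regular expression 12*12* + 12*02* + 02*. -/
import Mathlib
def IsTriword {n : ℕ} (u : Fin n → Fin 3) : Prop :=
  (∀ i : Fin n, (i : ℕ) = 0 → u i ≠ 2) ∧
  ∀ i j : Fin n, i < j → u i = 0 → u j ≠ 1

abbrev Triword (n : ℕ) := {u : Fin n → Fin 3 // IsTriword u}

namespace HLaux
variable {n : ℕ}

lemma f3cases (x : Fin 3) : x = 0 ∨ x = 1 ∨ x = 2 := by
  fin_cases x <;> simp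

lemma f3le2 (x : Fin 3) : x ≤ 2 := by fin_cases x <;> decide

lemma f3eq2 {x : Fin 3} (h : 2 ≤ x) : x = 2 := by
  rcases f3cases x with h' | h' | h' <;> subst h' <;> first | rfl | exact absurd h (by decide)

lemma f3eq1 {x : Fin 3} (h1 : 1 ≤ x) (h2 : x ≠ 2) : x = 1 := by
  rcases f3cases x with h' | h' | h' <;> subst h' <;>
    first | rfl | exact absurd h1 (by decide) | exact absurd rfl h2

lemma tw_le {u v : Triword n} : u ≤ v ↔ ∀ i, u.1 i ≤ v.1 i := Iff.rfl

def wA (n a : ℕ) : Triword n :=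
  ⟨fun i => if (i : ℕ) = 0 ∨ (i : ℕ) = a then (1 : Fin 3) else 2, by
    constructor
    · intro i hi
      simp [hi]
    · intro i j hij h0
      dsimp only at h0 ⊢
      split at h0 <;> simp_all⟩

def wB (n a : ℕ) : Triword n :=
  ⟨fun i => if (i : ℕ) = 0 then (1 : Fin 3) else if (i : ℕ) = a then 0 else 2, by
    constructor
    · intro i hi
      simp [hi]
    · intro i j hij h0
      dsimp only at h0 ⊢
      intro h1
      have hij' : (i : ℕ) < (j : ℕ) := hij
      split at h0
      · simp_all
      · split at h0
        · split at h1
          · omega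
          · split at h1 <;> simp_all
        · simp_all⟩

def wC (n : ℕ) : Triword n :=
  ⟨fun i => if (i : ℕ) = 0 then (0 : Fin 3) else 2, by
    constructor
    · intro i hi; simp [hi]
    · intro i j hij h0 h1
      dsimp only at h0 h1
      split at h1 <;> simp_all⟩

lemma le_top (v : Triword n) : v ≤ wA n 0 := by
  rw [tw_le]
  intro i
  by_cases hi : (i : ℕ) = 0
  · have h2 := v.2.1 i hi
    simp only [wA, hi, if_pos (Or.inl rfl)]
    rcases f3cases (v.1 i) with h | h | h <;> simp_all <;> decide
  · simpa [wA, hi] using f3le2 _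

end HLaux
namespace HLaux
variable {n : ℕ}

lemma tw_ext {u v : Triword n} (h : ∀ i, u.1 i = v.1 i) : u = v := Subtype.ext (funext h)

lemma val0_ne2 (v : Triword n) (i : Fin n) (hi : (i : ℕ) = 0) : v.1 i ≠ 2 := v.2.1 i hi

lemma above_wA {a : ℕ} (ha : a ≠ 0) (han : a < n) {v : Triword n} (h : wA n a ≤ v) :
    v = wA n a ∨ v = wA n 0 := by
  rw [tw_le] at h
  have k0 : ∀ i : Fin n, (i : ℕ) = 0 → v.1 i = 1 := by
    intro i hi
    refine f3eq1 ?_ (val0_ne2 v i hi)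
    have := h i
    simpa [wA, hi] using this
  have k2 : ∀ i : Fin n, (i : ℕ) ≠ 0 → (i : ℕ) ≠ a → v.1 i = 2 := by
    intro i hi hia
    refine f3eq2 ?_
    have := h i
    simpa [wA, hi, hia] using this
  have ha1 : (1 : Fin 3) ≤ v.1 ⟨a, han⟩ := by
    have := h ⟨a, han⟩
    simpa [wA, ha] using this
  rcases f3cases (v.1 ⟨a, han⟩) with hv | hv | hv
  · rw [hv] at ha1; exact absurd ha1 (by decide)
  · left
    refine (tw_ext fun i => ?_).symm
    by_cases hi : (i : ℕ) = 0
    · simp [wA, hi, k0 i hi]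
    · by_cases hia : (i : ℕ) = a
      · have : i = ⟨a, han⟩ := Fin.ext hia
        subst this
        simp [wA, hia, hv]
      · simp [wA, hi, hia, k2 i hi hia]
  · right
    refine (tw_ext fun i => ?_).symm
    by_cases hi : (i : ℕ) = 0
    · simp [wA, hi, k0 i hi]
    · by_cases hia : (i : ℕ) = a
      · have : i = ⟨a, han⟩ := Fin.ext hia
        subst this
        simp [wA, hi, hv]
      · simp [wA, hi, hia, k2 i hi hia]

lemma above_wB {a : ℕ} (ha : a ≠ 0) (han : a < n) {v : Triword n} (h : wB n a ≤ v) :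
    v = wB n a ∨ v = wA n a ∨ v = wA n 0 := by
  rw [tw_le] at h
  have k0 : ∀ i : Fin n, (i : ℕ) = 0 → v.1 i = 1 := by
    intro i hi
    refine f3eq1 ?_ (val0_ne2 v i hi)
    have := h i
    simpa [wB, hi] using this
  have k2 : ∀ i : Fin n, (i : ℕ) ≠ 0 → (i : ℕ) ≠ a → v.1 i = 2 := by
    intro i hi hia
    refine f3eq2 ?_
    have := h i
    simpa [wB, hi, hia] using this
  rcases f3cases (v.1 ⟨a, han⟩) with hv | hv | hv
  · left
    refine (tw_ext fun i => ?_).symm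
    by_cases hi : (i : ℕ) = 0
    · simp [wB, hi, k0 i hi]
    · by_cases hia : (i : ℕ) = a
      · have : i = ⟨a, han⟩ := Fin.ext hia
        subst this
        simp [wB, hi, hia, hv]
      · simp [wB, hi, hia, k2 i hi hia]
  · right; left
    refine (tw_ext fun i => ?_).symm
    by_cases hi : (i : ℕ) = 0
    · simp [wA, hi, k0 i hi]
    · by_cases hia : (i : ℕ) = a
      · have : i = ⟨a, han⟩ := Fin.ext hia
        subst this
        simp [wA, hi, hia, hv]
      · simp [wA, hi, hia, k2 i hi hia]
  · right; right
    refine (tw_ext fun i => ?_).symm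
    by_cases hi : (i : ℕ) = 0
    · simp [wA, hi, k0 i hi]
    · by_cases hia : (i : ℕ) = a
      · have : i = ⟨a, han⟩ := Fin.ext hia
        subst this
        simp [wA, hi, ha, hv]
      · simp [wA, hi, hia, k2 i hi hia]

lemma above_wC (hn : 1 ≤ n) {v : Triword n} (h : wC n ≤ v) :
    v = wC n ∨ v = wA n 0 := by
  rw [tw_le] at h
  have k2 : ∀ i : Fin n, (i : ℕ) ≠ 0 → v.1 i = 2 := by
    intro i hi
    refine f3eq2 ?_
    have := h i
    simpa [wC, hi] using this
  rcases f3cases (v.1 ⟨0, hn⟩) with hv | hv | hv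
  · left
    refine (tw_ext fun i => ?_).symm
    by_cases hi : (i : ℕ) = 0
    · have : i = ⟨0, hn⟩ := Fin.ext hi
      subst this
      simp [wC, hv]
    · simp [wC, hi, k2 i hi]
  · right
    refine (tw_ext fun i => ?_).symm
    by_cases hi : (i : ℕ) = 0
    · have : i = ⟨0, hn⟩ := Fin.ext hi
      subst this
      simp [wA, hv]
    · simp [wA, hi, k2 i hi]
  · exact absurd hv (val0_ne2 v ⟨0, hn⟩ rfl)

end HLaux
namespace HLaux
variable {n : ℕ}

lemma lt_AT {a : ℕ} (ha : a ≠ 0) (han : a < n) : wA n a < wA n 0 := by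
  rw [lt_iff_le_and_ne]
  constructor
  · rw [tw_le]
    intro i
    show (if (i : ℕ) = 0 ∨ (i : ℕ) = a then (1 : Fin 3) else 2) ≤
      (if (i : ℕ) = 0 ∨ (i : ℕ) = 0 then (1 : Fin 3) else 2)
    split <;> split <;> first | decide | (exfalso; omega)
  · intro h
    have := congrFun (congrArg Subtype.val h) ⟨a, han⟩
    simp [wA, ha] at this

lemma lt_BA {a : ℕ} (ha : a ≠ 0) (han : a < n) : wB n a < wA n a := by
  rw [lt_iff_le_and_ne]
  constructor
  · rw [tw_le]
    intro i
    show (if (i : ℕ) = 0 then (1 : Fin 3) else if (i : ℕ) = a then 0 else 2) ≤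
      (if (i : ℕ) = 0 ∨ (i : ℕ) = a then (1 : Fin 3) else 2)
    split <;> split <;> first | decide | (exfalso; omega) | (split <;> first | decide | (exfalso; omega))
  · intro h
    have := congrFun (congrArg Subtype.val h) ⟨a, han⟩
    simp [wA, wB, ha] at this

lemma lt_CT (hn : 1 ≤ n) : wC n < wA n 0 := by
  rw [lt_iff_le_and_ne]
  constructor
  · rw [tw_le]
    intro i
    show (if (i : ℕ) = 0 then (0 : Fin 3) else 2) ≤
      (if (i : ℕ) = 0 ∨ (i : ℕ) = 0 then (1 : Fin 3) else 2)
    split <;> split <;> first | decide | (exfalso; omega)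
  · intro h
    have := congrFun (congrArg Subtype.val h) ⟨0, hn⟩
    simp [wA, wC] at this

lemma euA {a : ℕ} (ha : a ≠ 0) (han : a < n) : ∃! v : Triword n, wA n a ⋖ v := by
  refine ⟨wA n 0, ⟨lt_AT ha han, fun w hw1 hw2 => ?_⟩, fun v hv => ?_⟩
  · rcases above_wA ha han hw1.le with h | h
    · exact hw1.ne' h
    · exact hw2.ne h
  · rcases above_wA ha han hv.lt.le with h | h
    · exact absurd h hv.lt.ne'
    · exact h

lemma euB {a : ℕ} (ha : a ≠ 0) (han : a < n) : ∃! v : Triword n, wB n a ⋖ v := by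
  refine ⟨wA n a, ⟨lt_BA ha han, fun w hw1 hw2 => ?_⟩, fun v hv => ?_⟩
  · rcases above_wB ha han hw1.le with h | h | h
    · exact hw1.ne' h
    · exact hw2.ne h
    · subst h
      exact absurd (lt_AT ha han) (asymm hw2)
  · rcases above_wB ha han hv.lt.le with h | h | h
    · exact absurd h hv.lt.ne'
    · exact h
    · subst h
      exact absurd (lt_AT ha han) (hv.2 (lt_BA ha han))

lemma euC (hn : 1 ≤ n) : ∃! v : Triword n, wC n ⋖ v := by
  refine ⟨wA n 0, ⟨lt_CT hn, fun w hw1 hw2 => ?_⟩, fun v hv => ?_⟩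
  · rcases above_wC hn hw1.le with h | h
    · exact hw1.ne' h
    · exact hw2.ne h
  · rcases above_wC hn hv.lt.le with h | h
    · exact absurd h hv.lt.ne'
    · exact h

end HLaux

namespace HLaux
variable {n : ℕ}

lemma cov_update (u : Triword n) (i : Fin n) (x : Fin 3)
    (hval : IsTriword (Function.update u.1 i x)) (hlt : u.1 i < x)
    (hmid : ∀ y : Fin 3, u.1 i < y → y < x → ¬ IsTriword (Function.update u.1 i y)) :
    u ⋖ (⟨Function.update u.1 i x, hval⟩ : Triword n) := by
  constructor
  · rw [lt_iff_le_and_ne]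
    constructor
    · rw [tw_le]
      intro j
      by_cases hj : j = i
      · subst hj; simp [hlt.le]
      · simp [Function.update_of_ne hj]
    · intro h
      have := congrFun (congrArg Subtype.val h) i
      simp at this
      exact hlt.ne this
  · intro w h1 h2
    have huw := tw_le.mp h1.le
    have hwv := tw_le.mp h2.le
    have hji : ∀ j, j ≠ i → w.1 j = u.1 j := by
      intro j hj
      refine le_antisymm ?_ (huw j)
      have := hwv j
      simpa [Function.update_of_ne hj] using this
    have hw : w.1 = Function.update u.1 i (w.1 i) := by
      funext j
      by_cases hj : j = i
      · subst hj; simp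
      · simp [Function.update_of_ne hj, hji j hj]
    have hy1 : u.1 i ≤ w.1 i := huw i
    have hy2 : w.1 i ≤ x := by
      have := hwv i
      simpa using this
    rcases eq_or_lt_of_le hy1 with he | hlt1
    · exact h1.ne' (tw_ext fun j => by
        by_cases hj : j = i
        · subst hj; exact he.symm
        · exact hji j hj)
    · rcases eq_or_lt_of_le hy2 with he | hlt2
      · exact h2.ne (tw_ext fun j => by
          by_cases hj : j = i
          · subst hj; simpa [he] using congrFun hw j
          · simp [hji j hj, Function.update_of_ne hj])
      · exact hmid (w.1 i) hlt1 hlt2 (hw ▸ w.2)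

lemma valid_1to2 (u : Triword n) (i : Fin n) (hi : (i : ℕ) ≠ 0) (h1 : u.1 i = 1) :
    IsTriword (Function.update u.1 i 2) := by
  constructor
  · intro j hj
    have hjne : j ≠ i := fun h => hi (h ▸ hj)
    rw [Function.update_of_ne hjne]
    exact u.2.1 j hj
  · intro j k hjk h0 hk1
    have hjne : j ≠ i := by
      intro h; subst h; rw [Function.update_self] at h0; exact absurd h0 (by decide)
    have hkne : k ≠ i := by
      intro h; subst h; rw [Function.update_self] at hk1; exact absurd hk1 (by decide)
    rw [Function.update_of_ne hjne] at h0
    rw [Function.update_of_ne hkne] at hk1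
    exact u.2.2 j k hjk h0 hk1

lemma valid_0to1 (u : Triword n) (i : Fin n) (hf : ∀ j, j < i → u.1 j ≠ 0) :
    IsTriword (Function.update u.1 i 1) := by
  constructor
  · intro j hj
    by_cases hjne : j = i
    · subst hjne; rw [Function.update_self]; decide
    · rw [Function.update_of_ne hjne]; exact u.2.1 j hj
  · intro j k hjk h0 hk1
    have hjne : j ≠ i := by
      intro h; subst h; rw [Function.update_self] at h0; exact absurd h0 (by decide)
    rw [Function.update_of_ne hjne] at h0
    by_cases hkne : k = i
    · subst hkne
      exact hf j hjk h0
    · rw [Function.update_of_ne hkne] at hk1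
      exact u.2.2 j k hjk h0 hk1

lemma valid_0to2 (u : Triword n) (i : Fin n) (p : Fin n) (hp : p < i) (hp0 : u.1 p = 0) :
    IsTriword (Function.update u.1 i 2) := by
  constructor
  · intro j hj
    have hjne : j ≠ i := by
      intro h
      subst h
      have : (p : ℕ) < (j : ℕ) := hp
      omega
    rw [Function.update_of_ne hjne]
    exact u.2.1 j hj
  · intro j k hjk h0 hk1
    have hjne : j ≠ i := by
      intro h; subst h; rw [Function.update_self] at h0; exact absurd h0 (by decide)
    have hkne : k ≠ i := by
      intro h; subst h; rw [Function.update_self] at hk1; exact absurd hk1 (by decide)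
    rw [Function.update_of_ne hjne] at h0
    rw [Function.update_of_ne hkne] at hk1
    exact u.2.2 j k hjk h0 hk1

lemma defect_cover (u : Triword n) (i : Fin n)
    (hd : u.1 i = 0 ∨ (u.1 i = 1 ∧ (i : ℕ) ≠ 0)) :
    ∃ v : Triword n, (u ⋖ v) ∧ v.1 i ≠ u.1 i ∧ ∀ j, j ≠ i → v.1 j = u.1 j := by
  rcases hd with h0 | ⟨h1, hi⟩
  · by_cases hex : ∃ p, p < i ∧ u.1 p = 0
    · obtain ⟨p, hp, hp0⟩ := hex
      refine ⟨⟨Function.update u.1 i 2, valid_0to2 u i p hp hp0⟩,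
        cov_update u i 2 _ (by rw [h0]; decide) ?_, by simp [h0],
        fun j hj => Function.update_of_ne hj _ _⟩
      intro y hy1 hy2 hbad
      have hy : y = 1 := by
        rw [h0] at hy1
        rcases f3cases y with h | h | h <;> subst h <;> first | rfl | exact absurd hy1 (by decide) | exact absurd hy2 (by decide)
      subst hy
      refine hbad.2 p i hp ?_ ?_
      · have hpne : p ≠ i := Fin.ne_of_lt hp
        rw [Function.update_of_ne hpne]; exact hp0
      · rw [Function.update_self]
    · push_neg at hex
      refine ⟨⟨Function.update u.1 i 1, valid_0to1 u i hex⟩,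
        cov_update u i 1 _ (by rw [h0]; decide) ?_, by simp [h0],
        fun j hj => Function.update_of_ne hj _ _⟩
      intro y hy1 hy2
      rw [h0] at hy1
      exfalso
      rcases f3cases y with h | h | h <;> subst h <;>
        first | exact absurd hy1 (by decide) | exact absurd hy2 (by decide)
  · refine ⟨⟨Function.update u.1 i 2, valid_1to2 u i hi h1⟩,
      cov_update u i 2 _ (by rw [h1]; decide) ?_, by simp [h1],
      fun j hj => Function.update_of_ne hj _ _⟩
    intro y hy1 hy2
    rw [h1] at hy1
    exfalso
    rcases f3cases y with h | h | h <;> subst h <;>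
      first | exact absurd hy1 (by decide) | exact absurd hy2 (by decide)

end HLaux

namespace HLaux
variable {n : ℕ}

def Forms (n : ℕ) (u : Triword n) : Prop :=
  ((∃ a : ℕ, 1 ≤ a ∧ a < n ∧
      ∀ i : Fin n, u.1 i = if (i : ℕ) = 0 ∨ (i : ℕ) = a then 1 else 2) ∨
   (∃ a : ℕ, 1 ≤ a ∧ a < n ∧
      ∀ i : Fin n, u.1 i =
        if (i : ℕ) = 0 then 1 else if (i : ℕ) = a then 0 else 2) ∨
   (∀ i : Fin n, u.1 i = if (i : ℕ) = 0 then 0 else 2))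

def D (u : Triword n) : Finset (Fin n) :=
  Finset.univ.filter (fun i => u.1 i = 0 ∨ (u.1 i = 1 ∧ (i : ℕ) ≠ 0))

lemma mem_D {u : Triword n} {i : Fin n} :
    i ∈ D u ↔ (u.1 i = 0 ∨ (u.1 i = 1 ∧ (i : ℕ) ≠ 0)) := by
  simp [D]

lemma notmem_D {u : Triword n} {i : Fin n} (h : i ∉ D u) :
    ((i : ℕ) = 0 → u.1 i = 1) ∧ ((i : ℕ) ≠ 0 → u.1 i = 2) := by
  rw [mem_D] at h
  push_neg at h
  obtain ⟨h0, h1⟩ := h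
  constructor
  · intro hi
    have h2 := u.2.1 i hi
    rcases f3cases (u.1 i) with h | h | h
    · exact absurd h h0
    · exact h
    · exact absurd h h2
  · intro hi
    rcases f3cases (u.1 i) with h | h | h
    · exact absurd h h0
    · exact absurd (h1 h) hi
    · exact h

lemma D_empty_top {u : Triword n} (hD : D u = ∅) : u = wA n 0 := by
  refine tw_ext fun i => ?_
  have hi : i ∉ D u := by simp [hD]
  obtain ⟨h0, h2⟩ := notmem_D hi
  by_cases h : (i : ℕ) = 0
  · simp [wA, h, h0 h]
  · simp [wA, h, h2 h]

lemma not_eu_of_two {u : Triword n} (h : 2 ≤ (D u).card) : ¬ ∃! v : Triword n, u ⋖ v := by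
  rintro ⟨v, hv, huniq⟩
  obtain ⟨i, hi, j, hj, hij⟩ := Finset.one_lt_card.mp h
  obtain ⟨v1, hc1, hne1, heq1⟩ := defect_cover u i (mem_D.mp hi)
  obtain ⟨v2, hc2, hne2, heq2⟩ := defect_cover u j (mem_D.mp hj)
  have e1 := huniq v1 hc1
  have e2 := huniq v2 hc2
  have : v1 = v2 := e1.trans e2.symm
  have hji : j ≠ i := fun h => hij h.symm
  have := congrFun (congrArg Subtype.val this) j
  rw [heq1 j hji] at this
  exact hne2 this.symm

lemma D_one_forms {u : Triword n} (h : (D u).card = 1) : Forms n u := by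
  obtain ⟨a, ha⟩ := Finset.card_eq_one.mp h
  have hmem : a ∈ D u := by simp [ha]
  have hnm : ∀ i : Fin n, i ≠ a → i ∉ D u := by
    intro i hi hmem'
    rw [ha] at hmem'
    exact hi (Finset.mem_singleton.mp hmem')
  rcases mem_D.mp hmem with h0 | ⟨h1, hane⟩
  · by_cases ha0 : (a : ℕ) = 0
    · right; right
      intro i
      by_cases hia : i = a
      · subst hia; simp [ha0, h0]
      · obtain ⟨k0, k2⟩ := notmem_D (hnm i hia)
        by_cases hi0 : (i : ℕ) = 0
        · exact absurd (Fin.ext (hi0.trans ha0.symm)) hia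
        · simp [hi0, k2 hi0]
    · right; left
      refine ⟨(a : ℕ), Nat.one_le_iff_ne_zero.mpr ha0, a.isLt, fun i => ?_⟩
      by_cases hia : i = a
      · subst hia; simp [ha0, h0]
      · obtain ⟨k0, k2⟩ := notmem_D (hnm i hia)
        by_cases hi0 : (i : ℕ) = 0
        · simp [hi0, k0 hi0]
        · have : (i : ℕ) ≠ (a : ℕ) := fun hh => hia (Fin.ext hh)
          simp [hi0, this, k2 hi0]
  · left
    refine ⟨(a : ℕ), Nat.one_le_iff_ne_zero.mpr hane, a.isLt, fun i => ?_⟩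
    by_cases hia : i = a
    · subst hia; simp [h1]
    · obtain ⟨k0, k2⟩ := notmem_D (hnm i hia)
      by_cases hi0 : (i : ℕ) = 0
      · simp [hi0, k0 hi0]
      · have : (i : ℕ) ≠ (a : ℕ) := fun hh => hia (Fin.ext hh)
        simp [hi0, this, k2 hi0]

lemma char (hn : 1 ≤ n) (u : Triword n) :
    (∃! v : Triword n, u ⋖ v) ↔ Forms n u := by
  constructor
  · intro hEU
    rcases Nat.lt_or_ge (D u).card 2 with hc | hc
    · interval_cases hc' : (D u).card
      · have := D_empty_top (Finset.card_eq_zero.mp hc')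
        subst this
        obtain ⟨v, hv, -⟩ := hEU
        exact absurd hv.lt (le_top v).not_gt
      · exact D_one_forms hc'
    · exact absurd hEU (not_eu_of_two hc)
  · intro hF
    rcases hF with ⟨a, ha1, han, h⟩ | ⟨a, ha1, han, h⟩ | h
    · have : u = wA n a := tw_ext fun i => h i
      rw [this]
      exact euA (by omega) han
    · have : u = wB n a := tw_ext fun i => h i
      rw [this]
      exact euB (by omega) han
    · have : u = wC n := tw_ext fun i => h i
      rw [this]
      exact euC hn

end HLaux

namespace HLaux
variable {n : ℕ}

def S (n : ℕ) : Finset (Triword n) :=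
  ((Finset.Ioo 0 n).image (fun a => wA n a)) ∪
    ((Finset.Ioo 0 n).image (fun a => wB n a)) ∪ {wC n}

lemma forms_iff_mem (u : Triword n) : Forms n u ↔ u ∈ S n := by
  constructor
  · rintro (⟨a, ha1, han, h⟩ | ⟨a, ha1, han, h⟩ | h)
    · exact Finset.mem_union_left _ (Finset.mem_union_left _
        (Finset.mem_image.mpr ⟨a, Finset.mem_Ioo.mpr ⟨ha1, han⟩,
          (show u = wA n a from tw_ext fun i => h i).symm⟩))
    · exact Finset.mem_union_left _ (Finset.mem_union_right _
        (Finset.mem_image.mpr ⟨a, Finset.mem_Ioo.mpr ⟨ha1, han⟩,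
          (show u = wB n a from tw_ext fun i => h i).symm⟩))
    · exact Finset.mem_union_right _ (Finset.mem_singleton.mpr
        (show u = wC n from tw_ext fun i => h i))
  · intro hu
    rcases Finset.mem_union.mp hu with hu | hu
    · rcases Finset.mem_union.mp hu with hu | hu
      · obtain ⟨a, ha, rfl⟩ := Finset.mem_image.mp hu
        obtain ⟨ha1, han⟩ := Finset.mem_Ioo.mp ha
        exact Or.inl ⟨a, ha1, han, fun i => rfl⟩
      · obtain ⟨a, ha, rfl⟩ := Finset.mem_image.mp hu
        obtain ⟨ha1, han⟩ := Finset.mem_Ioo.mp ha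
        exact Or.inr (Or.inl ⟨a, ha1, han, fun i => rfl⟩)
    · rw [Finset.mem_singleton.mp hu]
      exact Or.inr (Or.inr fun i => rfl)

lemma evA1 (a : ℕ) {b : ℕ} (hb : b < n) (h : b = 0 ∨ b = a) : (wA n a).1 ⟨b, hb⟩ = 1 := by
  simp only [wA]
  exact if_pos h

lemma evA2 {a b : ℕ} (hb : b < n) (h0 : b ≠ 0) (ha : b ≠ a) : (wA n a).1 ⟨b, hb⟩ = 2 := by
  simp only [wA]
  exact if_neg (by omega)

lemma evB0 {a b : ℕ} (hb : b < n) (h0 : b ≠ 0) (ha : b = a) : (wB n a).1 ⟨b, hb⟩ = 0 := by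
  simp only [wB]
  rw [if_neg h0, if_pos ha]

lemma evB1 (a : ℕ) (hn : 1 ≤ n) : (wB n a).1 ⟨0, hn⟩ = 1 := by
  simp [wB]

lemma evC0 (hn : 1 ≤ n) : (wC n).1 ⟨0, hn⟩ = 0 := by
  simp [wC]

lemma card_S (hn : 1 ≤ n) : (S n).card = 2 * n - 1 := by
  classical
  have hinjA : Set.InjOn (fun a => wA n a) ((Finset.Ioo 0 n) : Set ℕ) := by
    intro a ha b hb hab
    simp only [Finset.coe_Ioo, Set.mem_Ioo] at ha hb
    by_contra hne
    have h1 := evA1 a (b := a) ha.2 (Or.inr rfl)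
    have h2 := evA2 (a := b) (b := a) ha.2 (by omega) hne
    have hab' : wA n a = wA n b := hab
    rw [hab'] at h1
    exact absurd (h1.symm.trans h2) (by decide)
  have hinjB : Set.InjOn (fun a => wB n a) ((Finset.Ioo 0 n) : Set ℕ) := by
    intro a ha b hb hab
    simp only [Finset.coe_Ioo, Set.mem_Ioo] at ha hb
    by_contra hne
    have h1 := evB0 (a := a) (b := a) ha.2 (by omega) rfl
    have h2 : (wB n b).1 ⟨a, ha.2⟩ = 2 := by
      simp only [wB]
      rw [if_neg (by omega), if_neg hne]
    have hab' : wB n a = wB n b := hab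
    rw [hab'] at h1
    exact absurd (h1.symm.trans h2) (by decide)
  have hA : ((Finset.Ioo 0 n).image (fun a => wA n a)).card = n - 1 := by
    rw [Finset.card_image_of_injOn hinjA, Nat.card_Ioo]
    omega
  have hB : ((Finset.Ioo 0 n).image (fun a => wB n a)).card = n - 1 := by
    rw [Finset.card_image_of_injOn hinjB, Nat.card_Ioo]
    omega
  have hdisjAB : Disjoint ((Finset.Ioo 0 n).image (fun a => wA n a))
      ((Finset.Ioo 0 n).image (fun a => wB n a)) := by
    rw [Finset.disjoint_left]
    intro u huA huB
    obtain ⟨a, ha, rfl⟩ := Finset.mem_image.mp huA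
    obtain ⟨b, hb, hEq⟩ := Finset.mem_image.mp huB
    obtain ⟨hb1, hbn⟩ := Finset.mem_Ioo.mp hb
    have h0 := evB0 (a := b) (b := b) hbn (by omega) rfl
    have hEq' : wB n b = wA n a := hEq
    rw [hEq'] at h0
    by_cases hba : b = a
    · have := evA1 a (b := b) hbn (Or.inr hba)
      rw [this] at h0
      exact absurd h0 (by decide)
    · have := evA2 (a := a) (b := b) hbn (by omega) hba
      rw [this] at h0
      exact absurd h0 (by decide)
  have hdisjC : Disjoint (((Finset.Ioo 0 n).image (fun a => wA n a)) ∪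
      ((Finset.Ioo 0 n).image (fun a => wB n a))) ({wC n} : Finset (Triword n)) := by
    rw [Finset.disjoint_right]
    intro u huC huAB
    rw [Finset.mem_singleton.mp huC] at huAB
    rcases Finset.mem_union.mp huAB with hu | hu
    · obtain ⟨a, ha, hEq⟩ := Finset.mem_image.mp hu
      have h1 := evA1 a (b := 0) hn (Or.inl rfl)
      have hEq' : wA n a = wC n := hEq
      rw [hEq', evC0 hn] at h1
      exact absurd h1 (by decide)
    · obtain ⟨a, ha, hEq⟩ := Finset.mem_image.mp hu
      have h1 := evB1 a (n := n) hn
      have hEq' : wB n a = wC n := hEq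
      rw [hEq', evC0 hn] at h1
      exact absurd h1 (by decide)
  rw [S, Finset.card_union_of_disjoint hdisjC, Finset.card_union_of_disjoint hdisjAB,
    hA, hB, Finset.card_singleton]
  omega

lemma count (hn : 1 ≤ n) :
    Nat.card {u : Triword n // ∃! v : Triword n, u ⋖ v} = 2 * n - 1 := by
  have hiff : ∀ u : Triword n, (∃! v : Triword n, u ⋖ v) ↔ u ∈ S n := fun u =>
    (char hn u).trans (forms_iff_mem u)
  rw [Nat.card_congr (Equiv.subtypeEquivRight hiff)]
  rw [Nat.card_eq_fintype_card, Fintype.card_coe]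
  exact card_S hn

end HLaux

/-- In the Hochschild lattice of size `n ≥ 1` there are exactly `2n - 1`
meet-irreducible elements (elements covered by exactly one element); they are
precisely the triwords matching `12*12* + 12*02* + 02*`. -/
theorem meet_irreducibles (n : ℕ) (hn : 1 ≤ n) :
    Nat.card {u : Triword n // ∃! v : Triword n, u ⋖ v} = 2 * n - 1 ∧
    ∀ u : Triword n, (∃! v : Triword n, u ⋖ v) ↔
      ((∃ a : ℕ, 1 ≤ a ∧ a < n ∧
          ∀ i : Fin n, u.1 i = if (i : ℕ) = 0 ∨ (i : ℕ) = a then 1 else 2) ∨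
       (∃ a : ℕ, 1 ≤ a ∧ a < n ∧
          ∀ i : Fin n, u.1 i =
            if (i : ℕ) = 0 then 1 else if (i : ℕ) = a then 0 else 2) ∨
       (∀ i : Fin n, u.1 i = if (i : ℕ) = 0 then 0 else 2)) := by
  exact ⟨HLaux.count hn, fun u => HLaux.char hn u⟩
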